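/- arXiv:2401.12859 — 4 statements merged into one kernel-verified Lean document; each statement's English description precedes it below -/
import Mathlib

section
/- For positive integers a ≥ 2 and b, and 0 ≤ i ≤ m, we have r_{i,m}([a-1,1,b]) = ∑_{j=0}^{i} ⟪a-1, i-j⟫ · (∑_{k=j}^{m} ⟪b,k⟫) / (∑_{k=0}^{m} ⟪b,k⟫), and lim_{b→∞} r_{i,m}([a-1,1,b]) = ⟪a, i⟫. -/
open scoped BigOperators

/-- Generalized binomial coefficient `C(n,k)` for integer `n` and `k`, valued in `ℚ`:
`n(n-1)⋯(n-k+1)/k!` for `k ≥ 0`, and `0` for `k < 0`. -/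
def ichoose (n : ℤ) (k : ℤ) : ℚ :=
  if k < 0 then 0 else (∏ i ∈ Finset.range k.toNat, ((n : ℚ) - i)) / (k.toNat.factorial : ℚ)

/-- Generalized multichoose `⟪n, r⟫ = C(n + r - 1, r)`. -/
def imchoose (n : ℤ) (r : ℤ) : ℚ := ichoose (n + r - 1) r

/-- The `(m+1)×(m+1)` matrix `Λ_m(a)` whose (1-indexed) `(i,j)`-entry is `⟪a, m + 2 - i - j⟫`. -/
def Lam (m : ℕ) (a : ℤ) : Matrix (Fin (m+1)) (Fin (m+1)) ℚ :=
  fun i j => imchoose a ((m : ℤ) - (i : ℕ) - (j : ℕ))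

/-- The product `Λ_m(a₁) ⋯ Λ_m(aₙ)` for a continued fraction `[a₁, …, aₙ]`. -/
def CFmat (m : ℕ) (l : List ℤ) : Matrix (Fin (m+1)) (Fin (m+1)) ℚ :=
  (l.map (Lam m)).prod

/-- `r_{i,m}` of the continued fraction `l`: the `(m+1-i)`-th entry (1-indexed) of the first
column of the matrix product `Λ_m(a₁) ⋯ Λ_m(aₙ)`, divided by the bottom-left entry. -/
def rCF (m : ℕ) (l : List ℤ) (i : ℕ) : ℚ :=
  CFmat m l ⟨m - i, by omega⟩ ⟨0, by omega⟩ / CFmat m l ⟨m, by omega⟩ ⟨0, by omega⟩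

/-- The value of a continued fraction `[a₁, …, aₙ] = a₁ + 1/(a₂ + 1/(⋯))`. -/
def cfVal : List ℤ → ℚ
  | [] => 0
  | [a] => a
  | a :: l => a + 1 / cfVal l

/-! ### Auxiliary lemmas -/

lemma ichoose_natCast (n : ℤ) (k : ℕ) :
    ichoose n (k : ℤ) = (∏ i ∈ Finset.range k, ((n:ℚ) - i)) / (k.factorial : ℚ) := by
  simp [ichoose]

lemma imchoose_neg {n r : ℤ} (h : r < 0) : imchoose n r = 0 := by
  simp [imchoose, ichoose, h]

lemma imchoose_zero (n : ℤ) : imchoose n 0 = 1 := by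
  simp [imchoose, ichoose]

lemma imchoose_succ (n : ℤ) (k : ℕ) :
    imchoose n ((k:ℤ)+1) = imchoose n k * ((n + k) / (k+1)) := by
  have h1 : (n : ℤ) + ((k:ℤ)+1) - 1 = n + k := by ring
  have h2 : (n : ℤ) + (k:ℤ) - 1 = n + k - 1 := by ring
  rw [imchoose, imchoose, h1, h2]
  have : ((k:ℤ)+1) = ((k+1 : ℕ) : ℤ) := by push_cast; ring
  rw [this, ichoose_natCast, ichoose_natCast, Finset.prod_range_succ', Nat.factorial_succ]
  push_cast
  have e1 : ∀ i ∈ Finset.range k, ((n:ℚ) + k - (i+1)) = ((n:ℚ) + k - 1 - i) := by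
    intro i _; ring
  rw [Finset.prod_congr rfl e1]
  have hk : (k.factorial : ℚ) ≠ 0 := by exact_mod_cast k.factorial_ne_zero
  have hk1 : ((k:ℚ)+1) ≠ 0 := by positivity
  rw [div_mul_div_comm]
  ring

lemma ichoose_pascal (n : ℤ) (k : ℕ) :
    ichoose n ((k:ℤ)+1) = ichoose (n-1) k + ichoose (n-1) ((k:ℤ)+1) := by
  have : ((k:ℤ)+1) = ((k+1 : ℕ) : ℤ) := by push_cast; ring
  rw [this, ichoose_natCast, ichoose_natCast, ichoose_natCast,
    Finset.prod_range_succ' (fun i => ((n:ℚ) - i)), Finset.prod_range_succ,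
    Nat.factorial_succ]
  push_cast
  have e1 : ∀ i ∈ Finset.range k, ((n:ℚ) - (i+1)) = ((n:ℚ) - 1 - i) := by intro i _; ring
  rw [Finset.prod_congr rfl e1]
  have hk : (k.factorial : ℚ) ≠ 0 := by exact_mod_cast k.factorial_ne_zero
  have hk1 : ((k:ℚ)+1) ≠ 0 := by positivity
  field_simp
  ring

lemma imchoose_one (r : ℕ) : imchoose 1 (r : ℤ) = 1 := by
  induction r with
  | zero => simpa using imchoose_zero 1
  | succ r ih =>
    have := imchoose_succ 1 r
    push_cast
    push_cast at this ih
    rw [this, ih, one_mul, add_comm (1:ℚ) (r:ℚ), div_self (by positivity)]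

lemma imchoose_pos {b : ℤ} (hb : 1 ≤ b) (k : ℕ) : 0 < imchoose b (k : ℤ) := by
  induction k with
  | zero => simpa using imchoose_zero b |>.symm ▸ one_pos
  | succ k ih =>
    have := imchoose_succ b k
    push_cast at this ⊢
    rw [this]
    apply mul_pos ih
    apply div_pos
    · have : (1:ℚ) ≤ (b:ℚ) := by exact_mod_cast hb
      have : (0:ℚ) ≤ (k:ℚ) := by positivity
      linarith
    · positivity

lemma imchoose_mono {b : ℤ} {k l : ℕ} (hkl : k ≤ l) (hlb : (l:ℤ) ≤ b) :
    imchoose b (k:ℤ) ≤ imchoose b (l:ℤ) := by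
  induction l, hkl using Nat.le_induction with
  | base => exact le_refl _
  | succ l hkl ih =>
    have hlb' : ((l:ℤ)) ≤ b := by push_cast at hlb ⊢; omega
    have hb1 : (1:ℤ) ≤ b := by push_cast at hlb; omega
    refine le_trans (ih hlb') ?_
    have := imchoose_succ b l
    push_cast at this ⊢
    rw [this]
    nth_rewrite 1 [← mul_one (imchoose b l)]
    apply mul_le_mul_of_nonneg_left _ (le_of_lt (imchoose_pos hb1 l))
    rw [le_div_iff₀ (by positivity)]
    have : ((l:ℚ))+1 ≤ (b:ℚ) + l := by
      have : ((l:ℚ)) + 1 ≤ (b:ℚ) := by exact_mod_cast hlb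
      linarith
    linarith

lemma sum_imchoose (n : ℤ) (i : ℕ) :
    ∑ j ∈ Finset.range (i+1), imchoose n (j:ℤ) = imchoose (n+1) (i:ℤ) := by
  induction i with
  | zero => simp [imchoose_zero]
  | succ i ih =>
    rw [Finset.sum_range_succ, ih]
    have h1 : imchoose (n+1) ((i:ℤ)+1) = ichoose (n+1+i) ((i:ℤ)+1) := by
      unfold imchoose; ring_nf
    have h2 : imchoose (n+1) (i:ℤ) = ichoose (n+i) (i:ℤ) := by unfold imchoose; ring_nf
    have h3 : imchoose n ((i:ℤ)+1) = ichoose (n+i) ((i:ℤ)+1) := by unfold imchoose; ring_nf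
    have := ichoose_pascal (n+1+i) i
    have h4 : (n:ℤ)+1+i-1 = n+i := by ring
    rw [h4] at this
    push_cast
    rw [h1, h2, h3, this]

lemma imchoose_one' (r : ℤ) (h : 0 ≤ r) : imchoose 1 r = 1 := by
  lift r to ℕ using h
  exact imchoose_one r

lemma BC_entry (m : ℕ) (b : ℤ) (q : Fin (m+1)) (hq0 : (0:ℕ) < m + 1) :
    (Lam m 1 * Lam m b) q ⟨0, hq0⟩ = ∑ t ∈ Finset.Icc (q:ℕ) m, imchoose b (t:ℤ) := by
  rw [Matrix.mul_apply]
  have : ∀ k : Fin (m+1), Lam m 1 q k * Lam m b k ⟨0, hq0⟩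
      = (fun k : ℕ => imchoose 1 ((m:ℤ) - q - k) * imchoose b ((m:ℤ) - k)) k := by
    intro k; simp [Lam]
  rw [Finset.sum_congr rfl (fun k _ => this k),
    Fin.sum_univ_eq_sum_range (fun k : ℕ => imchoose 1 ((m:ℤ) - q - k) * imchoose b ((m:ℤ) - k)) (m+1)]
  rw [← Finset.sum_range_reflect]
  have e : ∀ k ∈ Finset.range (m+1),
      imchoose 1 ((m:ℤ) - q - ((m + 1 - 1 - k : ℕ):ℤ)) * imchoose b ((m:ℤ) - ((m + 1 - 1 - k : ℕ):ℤ))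
      = if (q:ℕ) ≤ k then imchoose b (k:ℤ) else 0 := by
    intro k hk
    rw [Finset.mem_range] at hk
    have hk' : k ≤ m := by omega
    have hc : ((m + 1 - 1 - k : ℕ):ℤ) = (m:ℤ) - k := by omega
    rw [hc]
    have h2 : (m:ℤ) - ((m:ℤ) - k) = (k:ℤ) := by ring
    rw [h2]
    by_cases h : (q:ℕ) ≤ k
    · have : (0:ℤ) ≤ (m:ℤ) - q - ((m:ℤ) - k) := by
        have := q.isLt; omega
      rw [if_pos h, imchoose_one' _ this, one_mul]
    · have : (m:ℤ) - q - ((m:ℤ) - k) < 0 := by omega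
      rw [if_neg h, imchoose_neg this, zero_mul]
  rw [Finset.sum_congr rfl e, ← Finset.sum_filter]
  congr 1
  ext k
  simp [Nat.lt_succ_iff]
  omega

lemma full_entry (m : ℕ) (x b : ℤ) (p : Fin (m+1)) (hq0 : (0:ℕ) < m + 1) :
    CFmat m [x, 1, b] p ⟨0, hq0⟩ =
      ∑ q ∈ Finset.range (m+1), imchoose x ((m:ℤ) - (p:ℕ) - q) *
        ∑ t ∈ Finset.Icc q m, imchoose b (t:ℤ) := by
  have hC : CFmat m [x, 1, b] = Lam m x * (Lam m 1 * Lam m b) := by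
    simp [CFmat, Matrix.mul_assoc]
  rw [hC, Matrix.mul_apply]
  have : ∀ k : Fin (m+1), Lam m x p k * (Lam m 1 * Lam m b) k ⟨0, hq0⟩
      = (fun q : ℕ => imchoose x ((m:ℤ) - (p:ℕ) - q) * ∑ t ∈ Finset.Icc q m, imchoose b (t:ℤ)) k := by
    intro k
    rw [BC_entry m b k hq0]
    simp [Lam]
  rw [Finset.sum_congr rfl (fun k _ => this k)]
  exact Fin.sum_univ_eq_sum_range (fun q : ℕ => imchoose x ((m:ℤ) - (p:ℕ) - q) * ∑ t ∈ Finset.Icc q m, imchoose b (t:ℤ)) (m+1)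

lemma num_entry (m i : ℕ) (x b : ℤ) (him : i ≤ m) (h1 : m - i < m + 1) (h2 : (0:ℕ) < m + 1) :
    CFmat m [x, 1, b] ⟨m - i, h1⟩ ⟨0, h2⟩ =
      ∑ j ∈ Finset.range (i+1), imchoose x ((i:ℤ) - j) *
        ∑ t ∈ Finset.Icc j m, imchoose b (t:ℤ) := by
  rw [full_entry m x b ⟨m - i, h1⟩ h2]
  have e : ∀ q ∈ Finset.range (m+1),
      imchoose x ((m:ℤ) - ((⟨m - i, h1⟩ : Fin (m+1)):ℕ) - q) *
        ∑ t ∈ Finset.Icc q m, imchoose b (t:ℤ)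
      = imchoose x ((i:ℤ) - q) * ∑ t ∈ Finset.Icc q m, imchoose b (t:ℤ) := by
    intro q _
    congr 2
    simp only []
    have : ((m - i : ℕ) : ℤ) = (m:ℤ) - i := by omega
    rw [this]; ring
  rw [Finset.sum_congr rfl e]
  symm
  apply Finset.sum_subset
  · exact Finset.range_subset_range.2 (by omega)
  · intro q hq hq'
    rw [Finset.mem_range] at hq hq'
    have : (i:ℤ) - q < 0 := by omega
    rw [imchoose_neg this, zero_mul]

lemma den_entry (m : ℕ) (x b : ℤ) (h1 : m - 0 < m + 1) (h2 : (0:ℕ) < m + 1) :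
    CFmat m [x, 1, b] ⟨m, by omega⟩ ⟨0, h2⟩ =
      ∑ k ∈ Finset.range (m+1), imchoose b (k:ℤ) := by
  rw [full_entry m x b ⟨m, by omega⟩ h2]
  rw [Finset.sum_eq_single 0]
  · have : imchoose x ((m:ℤ) - ((⟨m, by omega⟩ : Fin (m+1)):ℕ) - (0:ℕ)) = 1 := by
      have : ((m:ℤ) - ((⟨m, by omega⟩ : Fin (m+1)):ℕ) - (0:ℕ)) = 0 := by simp
      rw [this, imchoose_zero]
    rw [this, one_mul]
    congr 1
    ext k
    simp [Nat.lt_succ_iff]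
  · intro q _ hq
    have : (m:ℤ) - ((⟨m, by omega⟩ : Fin (m+1)):ℕ) - q < 0 := by
      simp only []
      have : 1 ≤ q := Nat.one_le_iff_ne_zero.2 hq
      omega
    rw [imchoose_neg this, zero_mul]
  · intro h
    exact absurd (Finset.mem_range.2 (by omega)) h

/-- For positive integers `a ≥ 2` and `b`, and `0 ≤ i ≤ m`, we have
`r_{i,m}([a-1,1,b]) = ∑_{j=0}^{i} ⟪a-1, i-j⟫ ⬝ (∑_{k=j}^{m} ⟪b,k⟫) / (∑_{k=0}^{m} ⟪b,k⟫)`,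
and `lim_{b→∞} r_{i,m}([a-1,1,b]) = ⟪a, i⟫`. -/
theorem rCF_three_term_formula (m i : ℕ) (a : ℕ) (ha : 2 ≤ a) (him : i ≤ m) :
    (∀ b : ℕ, 0 < b →
      rCF m [(a : ℤ) - 1, 1, (b : ℤ)] i =
        ∑ j ∈ Finset.range (i + 1),
          imchoose ((a : ℤ) - 1) ((i : ℤ) - j) *
            ((∑ k ∈ Finset.Icc j m, imchoose (b : ℤ) (k : ℤ)) /
              (∑ k ∈ Finset.range (m + 1), imchoose (b : ℤ) (k : ℤ)))) ∧
    Filter.Tendsto (fun b : ℕ => rCF m [(a : ℤ) - 1, 1, (b : ℤ)] i) Filter.atTop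
      (nhds (imchoose (a : ℤ) (i : ℤ))) := by
  -- the closed formula holds for all b (no positivity needed)
  have formula : ∀ b : ℕ,
      rCF m [(a : ℤ) - 1, 1, (b : ℤ)] i =
        ∑ j ∈ Finset.range (i + 1),
          imchoose ((a : ℤ) - 1) ((i : ℤ) - j) *
            ((∑ k ∈ Finset.Icc j m, imchoose (b : ℤ) (k : ℤ)) /
              (∑ k ∈ Finset.range (m + 1), imchoose (b : ℤ) (k : ℤ))) := by
    intro b
    rw [rCF, num_entry m i ((a:ℤ)-1) b him (by omega) (by omega),
      den_entry m ((a:ℤ)-1) b (by omega) (by omega), Finset.sum_div]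
    exact Finset.sum_congr rfl (fun j _ => by rw [mul_div_assoc])
  refine ⟨fun b _ => formula b, ?_⟩
  -- limits
  have hDpos : ∀ b : ℕ, 1 ≤ b → 0 < ∑ k ∈ Finset.range (m + 1), imchoose (b : ℤ) (k:ℤ) := by
    intro b hb
    apply Finset.sum_pos
    · intro k _
      exact imchoose_pos (by exact_mod_cast hb) k
    · exact ⟨0, Finset.mem_range.2 (by omega)⟩
  -- each ratio tends to 1
  have hratio : ∀ j ∈ Finset.range (i+1),
      Filter.Tendsto (fun b : ℕ =>
        (∑ k ∈ Finset.Icc j m, imchoose (b : ℤ) (k:ℤ)) /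
          (∑ k ∈ Finset.range (m + 1), imchoose (b : ℤ) (k:ℤ)))
        Filter.atTop (nhds 1) := by
    intro j hj
    rw [Finset.mem_range] at hj
    have hjm : j ≤ m := by omega
    -- split the denominator
    have hsplit : ∀ b : ℕ,
        ∑ k ∈ Finset.range (m + 1), imchoose (b : ℤ) (k:ℤ) =
          (∑ k ∈ Finset.range j, imchoose (b : ℤ) (k:ℤ)) +
            ∑ k ∈ Finset.Icc j m, imchoose (b : ℤ) (k:ℤ) := by
      intro b
      have e1 : Finset.range (m+1) = Finset.Ico 0 (m+1) := by rw [Finset.range_eq_Ico]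
      have e2 : Finset.range j = Finset.Ico 0 j := by rw [Finset.range_eq_Ico]
      have e3 : Finset.Icc j m = Finset.Ico j (m+1) := by ext x; simp
      rw [e1, e2, e3]
      exact (Finset.sum_Ico_consecutive _ (Nat.zero_le j) (by omega)).symm
    -- the remainder tends to 0
    have hrem : Filter.Tendsto (fun b : ℕ =>
        (∑ k ∈ Finset.range j, imchoose (b : ℤ) (k:ℤ)) /
          (∑ k ∈ Finset.range (m + 1), imchoose (b : ℤ) (k:ℤ)))
        Filter.atTop (nhds 0) := by
      apply tendsto_of_tendsto_of_tendsto_of_le_of_le' (g := fun _ : ℕ => (0:ℚ))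
        (h := fun b : ℕ => ((m:ℚ) * m) / ((b:ℚ) + m - 1))
      · exact tendsto_const_nhds
      · -- upper bound function tends to 0
        have : Filter.Tendsto (fun b : ℕ => (b:ℚ) + ((m:ℚ) - 1)) Filter.atTop Filter.atTop :=
          Filter.tendsto_atTop_add_const_right _ _ tendsto_natCast_atTop_atTop
        have h0 := Filter.Tendsto.div_atTop (tendsto_const_nhds (x := ((m:ℚ) * m))) this
        convert h0 using 2 with b
        ring
      · -- eventual lower bound
        filter_upwards [Filter.eventually_ge_atTop 1] with b hb
        apply div_nonneg
        · exact Finset.sum_nonneg fun k _ => le_of_lt (imchoose_pos (by exact_mod_cast hb) k)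
        · exact le_of_lt (hDpos b hb)
      · -- eventual upper bound
        filter_upwards [Filter.eventually_ge_atTop (m+1)] with b hb
        have hb1 : 1 ≤ b := by omega
        have hDb := hDpos b hb1
        have hbmq0 : (0:ℚ) ≤ (b:ℚ) + m - 1 := by
          have hbq : (1:ℚ) ≤ (b:ℚ) := by exact_mod_cast hb1
          have hmq0 : (0:ℚ) ≤ (m:ℚ) := by positivity
          linarith
        rcases Nat.eq_zero_or_pos j with hj0 | hjpos
        · subst hj0
          simp only [Finset.range_zero, Finset.sum_empty, zero_div]
          apply div_nonneg (by positivity) hbmq0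
        · have hm1 : 1 ≤ m := by omega
          have hbmq : (0:ℚ) < (b:ℚ) + m - 1 := by
            have hbq : (1:ℚ) ≤ (b:ℚ) := by exact_mod_cast hb1
            have hmq1 : (1:ℚ) ≤ (m:ℚ) := by exact_mod_cast hm1
            linarith
          -- each term of numerator is ≤ imchoose b (m-1)
          have hbound : ∑ k ∈ Finset.range j, imchoose (b : ℤ) (k:ℤ)
              ≤ (m:ℚ) * imchoose (b:ℤ) ((m-1:ℕ):ℤ) := by
            calc ∑ k ∈ Finset.range j, imchoose (b : ℤ) (k:ℤ)
                ≤ ∑ _k ∈ Finset.range j, imchoose (b:ℤ) ((m-1:ℕ):ℤ) := by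
                  apply Finset.sum_le_sum
                  intro k hk
                  rw [Finset.mem_range] at hk
                  exact imchoose_mono (by omega) (by exact_mod_cast Nat.le_of_lt (by omega : m - 1 < b))
              _ = (j:ℚ) * imchoose (b:ℤ) ((m-1:ℕ):ℤ) := by
                  rw [Finset.sum_const, nsmul_eq_mul, Finset.card_range]
              _ ≤ (m:ℚ) * imchoose (b:ℤ) ((m-1:ℕ):ℤ) := by
                  apply mul_le_mul_of_nonneg_right
                  · exact_mod_cast hjm
                  · exact le_of_lt (imchoose_pos (by exact_mod_cast hb1) _)
          have hmm : imchoose (b:ℤ) ((m:ℕ):ℤ)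
              ≤ ∑ k ∈ Finset.range (m + 1), imchoose (b : ℤ) (k:ℤ) := by
            apply Finset.single_le_sum (f := fun k : ℕ => imchoose (b:ℤ) (k:ℤ))
            · intro k _; exact le_of_lt (imchoose_pos (by exact_mod_cast hb1) k)
            · exact Finset.mem_range.2 (by omega)
          have hmpos : (0:ℚ) < imchoose (b:ℤ) ((m:ℕ):ℤ) := imchoose_pos (by exact_mod_cast hb1) m
          have hIpos : (0:ℚ) < imchoose (b:ℤ) ((m-1:ℕ):ℤ) :=
            imchoose_pos (by exact_mod_cast hb1) _
          have step1 : (∑ k ∈ Finset.range j, imchoose (b : ℤ) (k:ℤ)) /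
                (∑ k ∈ Finset.range (m + 1), imchoose (b : ℤ) (k:ℤ))
              ≤ ((m:ℚ) * imchoose (b:ℤ) ((m-1:ℕ):ℤ)) / imchoose (b:ℤ) ((m:ℕ):ℤ) := by
            exact div_le_div₀ (mul_nonneg (by positivity) (le_of_lt hIpos)) hbound hmpos hmm
          refine le_trans step1 ?_
          -- now compute the ratio exactly
          have hrec : imchoose (b:ℤ) ((m:ℕ):ℤ)
              = imchoose (b:ℤ) ((m-1:ℕ):ℤ) * (((b:ℚ) + ((m-1:ℕ):ℤ)) / (((m-1:ℕ):ℚ)+1)) := by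
            have := imchoose_succ (b:ℤ) (m-1)
            have hc : (((m-1:ℕ):ℤ)+1) = ((m:ℕ):ℤ) := by omega
            rw [hc] at this
            rw [this]
            push_cast
            ring_nf
          rw [hrec]
          have hm1q : (((m-1:ℕ):ℚ)+1) = (m:ℚ) := by
            have : ((m-1:ℕ):ℚ) = (m:ℚ) - 1 := by
              have : ((m-1:ℕ):ℤ) = (m:ℤ) - 1 := by omega
              exact_mod_cast this
            rw [this]; ring
          have hbm : ((b:ℚ) + ((m-1:ℕ):ℤ)) = (b:ℚ) + m - 1 := by
            push_cast
            have : ((m-1:ℕ):ℚ) = (m:ℚ) - 1 := by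
              have : ((m-1:ℕ):ℤ) = (m:ℤ) - 1 := by omega
              exact_mod_cast this
            rw [this]; ring
          rw [hm1q, hbm]
          have hmq : (0:ℚ) < m := by exact_mod_cast hm1
          apply le_of_eq
          rw [div_eq_div_iff (by positivity) (ne_of_gt hbmq)]
          field_simp
    -- combine: ratio = 1 - remainder eventually
    have hev : ∀ᶠ b : ℕ in Filter.atTop,
        (∑ k ∈ Finset.Icc j m, imchoose (b : ℤ) (k:ℤ)) /
          (∑ k ∈ Finset.range (m + 1), imchoose (b : ℤ) (k:ℤ))
        = 1 - (∑ k ∈ Finset.range j, imchoose (b : ℤ) (k:ℤ)) /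
          (∑ k ∈ Finset.range (m + 1), imchoose (b : ℤ) (k:ℤ)) := by
      filter_upwards [Filter.eventually_ge_atTop 1] with b hb
      have hD := hDpos b hb
      rw [eq_sub_iff_add_eq, ← add_div, add_comm, ← hsplit b,
        div_self (ne_of_gt hD)]
    have : Filter.Tendsto (fun b : ℕ =>
        1 - (∑ k ∈ Finset.range j, imchoose (b : ℤ) (k:ℤ)) /
          (∑ k ∈ Finset.range (m + 1), imchoose (b : ℤ) (k:ℤ)))
        Filter.atTop (nhds (1 - 0)) := Filter.Tendsto.const_sub _ hrem
    rw [sub_zero] at this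
    exact Filter.Tendsto.congr' (Filter.EventuallyEq.symm hev) this
  -- sum of limits
  have hsumval : ∑ j ∈ Finset.range (i+1), imchoose ((a:ℤ)-1) ((i:ℤ) - j)
      = imchoose (a:ℤ) (i:ℤ) := by
    have e : ∀ j ∈ Finset.range (i+1),
        imchoose ((a:ℤ)-1) ((i:ℤ) - j) = imchoose ((a:ℤ)-1) (((i + 1 - 1 - j : ℕ)):ℤ) := by
      intro j hj
      rw [Finset.mem_range] at hj
      congr 1
      omega
    rw [Finset.sum_congr rfl e,
      Finset.sum_range_reflect (fun j => imchoose ((a:ℤ)-1) (j:ℤ)) (i+1),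
      sum_imchoose ((a:ℤ)-1) i]
    congr 1
    ring
  have hlim : Filter.Tendsto (fun b : ℕ =>
      ∑ j ∈ Finset.range (i + 1),
        imchoose ((a : ℤ) - 1) ((i : ℤ) - j) *
          ((∑ k ∈ Finset.Icc j m, imchoose (b : ℤ) (k:ℤ)) /
            (∑ k ∈ Finset.range (m + 1), imchoose (b : ℤ) (k:ℤ))))
      Filter.atTop (nhds (imchoose (a:ℤ) (i:ℤ))) := by
    rw [← hsumval]
    have : ∀ j ∈ Finset.range (i+1), Filter.Tendsto (fun b : ℕ =>
        imchoose ((a : ℤ) - 1) ((i : ℤ) - j) *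
          ((∑ k ∈ Finset.Icc j m, imchoose (b : ℤ) (k:ℤ)) /
            (∑ k ∈ Finset.range (m + 1), imchoose (b : ℤ) (k:ℤ))))
        Filter.atTop (nhds (imchoose ((a : ℤ) - 1) ((i : ℤ) - j))) := by
      intro j hj
      have := Filter.Tendsto.const_mul (imchoose ((a : ℤ) - 1) ((i : ℤ) - j)) (hratio j hj)
      rwa [mul_one] at this
    exact tendsto_finset_sum _ this
  exact Filter.Tendsto.congr (fun b => (formula b).symm) hlim
end

section
/- Let z be a rational number with continued fraction z = [c_1, ..., c_n] where c_n > 1, and let (z_i) be a sequence of rationals converging to z with continued fractions z_i = [d_{i,1}, d_{i,2}, ...]. Then there exists N such that for i > N, d_{i,j} = c_j for all j ≤ n-1, and d_{i,n} ∈ {c_n - 1, c_n}. -/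
open scoped BigOperators

/-- `l` is a continued fraction in standard (canonical) form: it is nonempty, all entries
after the first are positive integers, and if it has length at least `2` then its last
entry is at least `2`. -/
def IsCanonicalCF (l : List ℤ) : Prop :=
  l ≠ [] ∧ (∀ j : ℕ, 1 ≤ j → j < l.length → 1 ≤ l.getD j 0) ∧
    (2 ≤ l.length → 2 ≤ l.getLastD 0)

lemma getLastD_irrel {t : List ℤ} (ht : t ≠ []) (x y : ℤ) : t.getLastD x = t.getLastD y := by
  cases t with
  | nil => exact absurd rfl ht
  | cons b t' => rw [List.getLastD_cons, List.getLastD_cons]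

lemma tail_canonical {a : ℤ} {t : List ℤ} (h : IsCanonicalCF (a :: t)) (ht : t ≠ []) :
    IsCanonicalCF t := by
  obtain ⟨-, h1, h2⟩ := h
  refine ⟨ht, fun j hj hjl => ?_, fun hl => ?_⟩
  · have := h1 (j+1) (by omega) (by simp; omega)
    simpa using this
  · have hlen : 2 ≤ (a :: t).length := by simp; omega
    have := h2 hlen
    rw [List.getLastD_cons] at this
    rwa [getLastD_irrel ht 0 a]

lemma cfVal_bounds : ∀ l : List ℤ, IsCanonicalCF l →
    ((l.getD 0 0 : ℚ) ≤ cfVal l ∧ cfVal l < (l.getD 0 0 : ℚ) + 1) ∧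
      (2 ≤ l.length → (l.getD 0 0 : ℚ) < cfVal l) := by
  intro l
  induction l with
  | nil => intro h; exact absurd rfl h.1
  | cons a t ih =>
    intro h
    cases t with
    | nil => simp [cfVal]
    | cons b t' =>
      have ht : (b :: t') ≠ [] := by simp
      have htc := tail_canonical h ht
      have iht := ih htc
      have hwt : 1 < cfVal (b :: t') := by
        cases t' with
        | nil =>
          have h2 := h.2.2 (by simp)
          simp [List.getLastD_cons] at h2
          show (1:ℚ) < cfVal [b]
          rw [show cfVal [b] = (b:ℚ) from rfl]
          exact_mod_cast (by omega : (1:ℤ) < b)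
        | cons e t'' =>
          have hb1 : (1:ℚ) ≤ (b:ℚ) := by
            exact_mod_cast h.2.1 1 le_rfl (by simp)
          have hlt := iht.2 (by simp)
          simp only [List.getD_cons_zero] at hlt
          linarith
      have hv : cfVal (a :: b :: t') = a + 1 / cfVal (b :: t') := rfl
      have hpos : 0 < cfVal (b :: t') := by linarith
      have h1 : 0 < 1 / cfVal (b :: t') := by positivity
      have h2 : 1 / cfVal (b :: t') < 1 := by
        rw [div_lt_one hpos]; exact hwt
      constructor
      · constructor
        · simp only [List.getD_cons_zero, hv]; linarith
        · simp only [List.getD_cons_zero, hv]; linarith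
      · intro _
        simp only [List.getD_cons_zero, hv]; linarith

lemma one_lt_cfVal_tail {a : ℤ} {t : List ℤ} (h : IsCanonicalCF (a :: t)) (ht : t ≠ []) :
    1 < cfVal t := by
  have htc := tail_canonical h ht
  cases t with
  | nil => exact absurd rfl ht
  | cons b t' =>
    cases t' with
    | nil =>
      have h2 := h.2.2 (by simp)
      simp [List.getLastD_cons] at h2
      show (1:ℚ) < cfVal [b]
      rw [show cfVal [b] = (b:ℚ) from rfl]
      exact_mod_cast (by omega : (1:ℤ) < b)
    | cons e t'' =>
      have hb1 : (1:ℚ) ≤ (b:ℚ) := by exact_mod_cast h.2.1 1 le_rfl (by simp)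
      have hlt := (cfVal_bounds _ htc).2 (by simp)
      simp only [List.getD_cons_zero] at hlt
      linarith

lemma cf_key : ∀ (c : List ℤ), IsCanonicalCF c → 1 < c.getLastD 0 → ∀ z : ℚ, cfVal c = z →
    ∀ zs : ℕ → ℚ, Filter.Tendsto zs Filter.atTop (nhds z) →
    ∀ d : ℕ → List ℤ, (∀ i, IsCanonicalCF (d i)) → (∀ i, cfVal (d i) = zs i) →
    ∃ N : ℕ, ∀ i > N,
      (∀ j : ℕ, j < c.length - 1 → (d i).getD j 0 = c.getD j 0) ∧
      ((d i).getD (c.length - 1) 0 = c.getLastD 0 - 1 ∨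
        (d i).getD (c.length - 1) 0 = c.getLastD 0) := by
  intro c
  induction c with
  | nil => intro hc; exact absurd rfl hc.1
  | cons a c' ih =>
    intro hc hlast z hz zs hconv d hd hdval
    cases c' with
    | nil =>
      have hza : z = (a:ℚ) := by rw [← hz]; rfl
      have hlast' : 1 < a := by simpa using hlast
      have hev : ∀ᶠ i in Filter.atTop, zs i ∈ Set.Ioo ((a:ℚ) - 1/2) ((a:ℚ) + 1/2) :=
        hconv (Ioo_mem_nhds (by rw [hza]; linarith) (by rw [hza]; linarith))
      obtain ⟨N, hN⟩ := Filter.eventually_atTop.mp hev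
      refine ⟨N, fun i hi => ?_⟩
      obtain ⟨hi1, hi2⟩ := hN i (le_of_lt hi)
      have hb := (cfVal_bounds (d i) (hd i)).1
      rw [hdval i] at hb
      constructor
      · intro j hj; simp at hj
      · have h1 : ((d i).getD 0 0 : ℚ) < (a:ℚ) + 1 := by linarith [hb.1]
        have h2 : ((a:ℚ)) - 2 < ((d i).getD 0 0 : ℚ) := by linarith [hb.2]
        have h1' : (d i).getD 0 0 < a + 1 := by exact_mod_cast h1
        have h2' : a - 2 < (d i).getD 0 0 := by exact_mod_cast h2
        simp only [List.length_cons, List.length_nil, List.getLastD_cons, List.getLastD_nil,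
          Nat.add_sub_cancel]
        omega
    | cons b c'' =>
      set t := b :: c'' with htdef
      have htne : t ≠ [] := by simp [htdef]
      have htc := tail_canonical hc htne
      have hlastc : (a :: t).getLastD 0 = t.getLastD 0 := by
        rw [List.getLastD_cons, getLastD_irrel htne a 0]
      have hlast' : 1 < t.getLastD 0 := by rw [← hlastc]; exact hlast
      have hw1 : 1 < cfVal t := one_lt_cfVal_tail hc htne
      set w := cfVal t with hwdef
      have hw0 : (0:ℚ) < w := by linarith
      have hza : z = a + 1 / w := by rw [← hz]; rfl
      have hzgt : (a:ℚ) < z := by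
        have h1 : 0 < 1/w := by positivity
        rw [hza]; linarith
      have hzlt : z < (a:ℚ) + 1 := by
        have h2 : 1/w < 1 := by rw [div_lt_one hw0]; exact hw1
        rw [hza]; linarith
      have hz_sub : z - (a:ℚ) = w⁻¹ := by rw [hza]; ring
      have hwz : (z - (a:ℚ))⁻¹ = w := by rw [hz_sub, inv_inv]
      have main : ∀ i, (a:ℚ) < zs i → zs i < (a:ℚ) + 1 →
          (d i).getD 0 0 = a ∧ (d i).tail ≠ [] ∧ IsCanonicalCF (d i).tail ∧
            cfVal ((d i).tail) = (zs i - (a:ℚ))⁻¹ := by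
        intro i hi1 hi2
        obtain ⟨h0, t0, hde⟩ := List.exists_cons_of_ne_nil (hd i).1
        have hcan := hd i
        rw [hde] at hcan
        cases t0 with
        | nil =>
          exfalso
          have hint : zs i = (h0:ℚ) := by rw [← hdval i, hde]; rfl
          rw [hint] at hi1 hi2
          have g1 : a < h0 := by exact_mod_cast hi1
          have g2 : h0 < a + 1 := by exact_mod_cast hi2
          omega
        | cons b0 t0' =>
          have ht0 : (b0 :: t0') ≠ [] := by simp
          have htc0 := tail_canonical hcan ht0
          have hwt : 1 < cfVal (b0 :: t0') := one_lt_cfVal_tail hcan ht0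
          have hwt0 : (0:ℚ) < cfVal (b0 :: t0') := by linarith
          have hv : zs i = h0 + 1 / cfVal (b0 :: t0') := by rw [← hdval i, hde]; rfl
          have hfr1 : 0 < 1 / cfVal (b0 :: t0') := by positivity
          have hfr2 : 1 / cfVal (b0 :: t0') < 1 := by rw [div_lt_one hwt0]; exact hwt
          have gh : h0 = a := by
            have g1 : (h0:ℚ) < (a:ℚ) + 1 := by rw [hv] at hi2; linarith
            have g2 : (a:ℚ) < (h0:ℚ) + 1 := by rw [hv] at hi1; linarith
            have g1' : h0 < a + 1 := by exact_mod_cast g1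
            have g2' : a < h0 + 1 := by exact_mod_cast g2
            omega
          refine ⟨by rw [hde, gh]; rfl, by rw [hde]; simp, by rw [hde]; exact htc0, ?_⟩
          rw [hde]
          show cfVal (b0 :: t0') = (zs i - (a:ℚ))⁻¹
          rw [hv, gh]
          have hring : (a:ℚ) + 1 / cfVal (b0 :: t0') - a = (cfVal (b0 :: t0'))⁻¹ := by
            rw [one_div]; ring
          rw [hring, inv_inv]
      have hev : ∀ᶠ i in Filter.atTop, (a:ℚ) < zs i ∧ zs i < (a:ℚ) + 1 := by
        have hmem := hconv (Ioo_mem_nhds hzgt hzlt)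
        filter_upwards [hmem] with i hi
        exact ⟨hi.1, hi.2⟩
      classical
      set D : ℕ → List ℤ := fun i =>
        if (a:ℚ) < zs i ∧ zs i < (a:ℚ) + 1 then (d i).tail else t with hD
      have hDcan : ∀ i, IsCanonicalCF (D i) := by
        intro i
        by_cases h : (a:ℚ) < zs i ∧ zs i < (a:ℚ) + 1
        · simp only [hD, if_pos h]; exact (main i h.1 h.2).2.2.1
        · simp only [hD, if_neg h]; exact htc
      have hwconv : Filter.Tendsto (fun i => cfVal (D i)) Filter.atTop (nhds w) := by
        have h1 : Filter.Tendsto (fun i => (zs i - (a:ℚ))⁻¹) Filter.atTop (nhds w) := by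
          rw [← hwz]
          exact (hconv.sub_const (a:ℚ)).inv₀
            (by rw [hz_sub]; exact inv_ne_zero (by linarith))
        refine Filter.Tendsto.congr' ?_ h1
        filter_upwards [hev] with i hi
        simp only [hD, if_pos hi]
        exact ((main i hi.1 hi.2).2.2.2).symm
      obtain ⟨N1, hN1⟩ := ih htc hlast' w hwdef.symm _ hwconv D hDcan (fun i => rfl)
      obtain ⟨N0, hN0⟩ := Filter.eventually_atTop.mp hev
      refine ⟨max N0 N1, fun i hi => ?_⟩
      have hi0 := hN0 i (by omega)
      have hmi := main i hi0.1 hi0.2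
      have hDi : D i = (d i).tail := by simp only [hD]; rw [if_pos hi0]
      have hih := hN1 i (by omega)
      have hgd_succ : ∀ k : ℕ, (d i).getD (k+1) 0 = (d i).tail.getD k 0 := by
        intro k
        obtain ⟨h0, t0, hde⟩ := List.exists_cons_of_ne_nil (hd i).1
        rw [hde]; rfl
      constructor
      · intro j hj
        match j with
        | 0 => simpa using hmi.1
        | (k+1) =>
          have hk : k < t.length - 1 := by
            simp only [List.length_cons] at hj; omega
          have := hih.1 k hk
          rw [hDi] at this
          rw [hgd_succ k, this]
          simp [htdef]
      · have hlen : (a :: t).length - 1 = (t.length - 1) + 1 := by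
          simp [htdef]
        rw [hlen, hgd_succ, ← hDi, hlastc]
        exact hih.2


/-- Let `z` be a rational number with continued fraction `z = [c₁, …, cₙ]` where `cₙ > 1`,
and let `(zᵢ)` be a sequence of rationals converging to `z` with continued fractions
`zᵢ = [d_{i,1}, d_{i,2}, …]`.  Then there is `N` such that for `i > N`, `d_{i,j} = c_j` for
all `j ≤ n - 1`, and `d_{i,n} ∈ {cₙ - 1, cₙ}`. -/
theorem cf_digits_of_rational_limit (c : List ℤ) (hc : IsCanonicalCF c)
    (hlast : 1 < c.getLastD 0) (z : ℚ) (hz : cfVal c = z)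
    (zs : ℕ → ℚ) (hconv : Filter.Tendsto zs Filter.atTop (nhds z))
    (d : ℕ → List ℤ) (hd : ∀ i, IsCanonicalCF (d i)) (hdval : ∀ i, cfVal (d i) = zs i) :
    ∃ N : ℕ, ∀ i > N,
      (∀ j : ℕ, j < c.length - 1 → (d i).getD j 0 = c.getD j 0) ∧
      ((d i).getD (c.length - 1) 0 = c.getLastD 0 - 1 ∨
        (d i).getD (c.length - 1) 0 = c.getLastD 0) := by
  exact cf_key c hc hlast z hz zs hconv d hd hdval
end

section
/- For rational x ≥ 1 and 0 ≤ i ≤ m, the higher continued fraction satisfies the reciprocal relation r_{i,m}(1/x) = r_{m-i,m}(x) / r_{m,m}(x). In particular, r_{m,m}(1/x) = 1 / r_{m,m}(x). -/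
open scoped BigOperators

lemma imchoose_zero_s17 (r : ℤ) : imchoose 0 r = if r = 0 then 1 else 0 := by
  unfold imchoose ichoose
  rcases lt_trichotomy r 0 with h | h | h
  · rw [if_pos h, if_neg (by omega)]
  · subst h; simp
  · rw [if_neg (by omega), if_neg (by omega)]
    have h1 : r.toNat - 1 ∈ Finset.range r.toNat := by
      simp only [Finset.mem_range]; omega
    rw [Finset.prod_eq_zero h1, zero_div]
    have hr : (r.toNat : ℤ) = r := Int.toNat_of_nonneg h.le
    have : ((r.toNat - 1 : ℕ) : ℚ) = (r : ℚ) - 1 := by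
      rw [Nat.cast_sub (by omega)]
      push_cast [hr]
      ring_nf
      rw [show ((r.toNat : ℚ)) = ((r.toNat : ℤ) : ℚ) by push_cast; ring, hr]
    rw [this]; push_cast; ring

lemma imchoose_pos_s17 (a : ℤ) (ha : 1 ≤ a) (r : ℤ) (hr : 0 ≤ r) : 0 < imchoose a r := by
  unfold imchoose ichoose
  rw [if_neg (by omega)]
  apply div_pos
  · apply Finset.prod_pos
    intro i hi
    simp only [Finset.mem_range] at hi
    have : (i : ℚ) < ((a + r - 1 : ℤ) : ℚ) := by
      have : (i : ℤ) < r.toNat := by exact_mod_cast hi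
      push_cast
      have : (i : ℚ) < (r : ℚ) := by
        have : (i : ℤ) < r := by omega
        exact_mod_cast this
      have ha' : (1 : ℚ) ≤ (a : ℚ) := by exact_mod_cast ha
      linarith
    linarith
  · exact_mod_cast Nat.factorial_pos r.toNat

lemma imchoose_nonneg (a : ℤ) (ha : 1 ≤ a) (r : ℤ) : 0 ≤ imchoose a r := by
  rcases lt_or_ge r 0 with h | h
  · unfold imchoose ichoose; rw [if_pos h]
  · exact (imchoose_pos_s17 a ha r h).le

lemma CFmat_entries (m : ℕ) (l : List ℤ) (hl : l ≠ []) (hpos : ∀ a ∈ l, 1 ≤ a) :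
    (∀ i j, 0 ≤ CFmat m l i j) ∧ (∀ i : Fin (m+1), 0 < CFmat m l i ⟨0, by omega⟩) := by
  induction l with
  | nil => exact absurd rfl hl
  | cons a t ih =>
    have ha : 1 ≤ a := hpos a (by simp)
    have hL0 : ∀ i j : Fin (m+1), 0 ≤ Lam m a i j := fun i j =>
      imchoose_nonneg a ha _
    have hLc : ∀ i : Fin (m+1), 0 < Lam m a i ⟨0, by omega⟩ := by
      intro i
      apply imchoose_pos_s17 a ha
      have := i.isLt
      simp only [Fin.val_mk]
      omega
    rcases eq_or_ne t [] with rfl | ht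
    · have : CFmat m [a] = Lam m a := by
        simp [CFmat]
      rw [this]
      exact ⟨hL0, hLc⟩
    · obtain ⟨h0, hc⟩ := ih ht (fun b hb => hpos b (by simp [hb]))
      have hmul : CFmat m (a :: t) = Lam m a * CFmat m t := by
        simp [CFmat]
      rw [hmul]
      constructor
      · intro i j
        rw [Matrix.mul_apply]
        exact Finset.sum_nonneg fun k _ => mul_nonneg (hL0 i k) (h0 k j)
      · intro i
        rw [Matrix.mul_apply]
        apply Finset.sum_pos' (fun k _ => mul_nonneg (hL0 i k) (h0 k _))
        exact ⟨⟨0, by omega⟩, Finset.mem_univ _, mul_pos (hLc i) (hc _)⟩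

lemma Lam_zero_mul (m : ℕ) (M : Matrix (Fin (m+1)) (Fin (m+1)) ℚ) (i : Fin (m+1)) :
    (Lam m 0 * M) i ⟨0, by omega⟩ = M ⟨m - i, by omega⟩ ⟨0, by omega⟩ := by
  rw [Matrix.mul_apply]
  rw [Finset.sum_eq_single (⟨m - i, by omega⟩ : Fin (m+1))]
  · have : Lam m 0 i ⟨m - i, by omega⟩ = 1 := by
      unfold Lam
      rw [imchoose_zero_s17, if_pos]
      have := i.isLt
      simp only [Fin.val_mk]
      push_cast [Nat.cast_sub (by omega : (i : ℕ) ≤ m)]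
      ring
    rw [this, one_mul]
  · intro k _ hk
    have : Lam m 0 i k = 0 := by
      unfold Lam
      rw [imchoose_zero_s17, if_neg]
      intro hcontra
      apply hk
      have := i.isLt
      have := k.isLt
      apply Fin.ext
      simp only [Fin.val_mk]
      omega
    rw [this, zero_mul]
  · intro h; exact absurd (Finset.mem_univ _) h

lemma rCF_cons_zero (m : ℕ) (l : List ℤ) (i : ℕ) (him : i ≤ m) :
    rCF m (0 :: l) i =
      CFmat m l ⟨i, by omega⟩ ⟨0, by omega⟩ / CFmat m l ⟨0, by omega⟩ ⟨0, by omega⟩ := by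
  have hmul : CFmat m (0 :: l) = Lam m 0 * CFmat m l := by simp [CFmat]
  unfold rCF
  rw [hmul, Lam_zero_mul, Lam_zero_mul]
  congr 2 <;> (apply Fin.ext; simp only [Fin.val_mk]; omega)

lemma rCF_sub (m : ℕ) (l : List ℤ) (i : ℕ) (him : i ≤ m) :
    rCF m l (m - i) =
      CFmat m l ⟨i, by omega⟩ ⟨0, by omega⟩ / CFmat m l ⟨m, by omega⟩ ⟨0, by omega⟩ := by
  unfold rCF
  congr 2 <;> (apply Fin.ext; simp only [Fin.val_mk]; omega)

/-- For rational `x ≥ 1` and `0 ≤ i ≤ m`, the higher continued fraction satisfies the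
reciprocal relation `r_{i,m}(1/x) = r_{m-i,m}(x) / r_{m,m}(x)` (where `1/x` has continued
fraction `[0, c₁, c₂, …]` when `x = [c₁, c₂, …]`).  In particular
`r_{m,m}(1/x) = 1 / r_{m,m}(x)`. -/
theorem rCF_inv (m : ℕ) (x : ℚ) (hx : 1 ≤ x) (l : List ℤ) (hl : l ≠ [])
    (hpos : ∀ a ∈ l, 1 ≤ a) (hval : cfVal l = x) (i : ℕ) (him : i ≤ m) :
    rCF m (0 :: l) i = rCF m l (m - i) / rCF m l m ∧
    rCF m (0 :: l) m = 1 / rCF m l m := by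
  obtain ⟨h0, hc⟩ := CFmat_entries m l hl hpos
  have hMm : CFmat m l ⟨m, by omega⟩ ⟨0, by omega⟩ ≠ 0 := ne_of_gt (hc _)
  have hM0 : CFmat m l ⟨0, by omega⟩ ⟨0, by omega⟩ ≠ 0 := ne_of_gt (hc _)
  have hmm : rCF m l m =
      CFmat m l ⟨0, by omega⟩ ⟨0, by omega⟩ / CFmat m l ⟨m, by omega⟩ ⟨0, by omega⟩ := by
    have := rCF_sub m l 0 (by omega)
    simpa using this
  constructor
  · rw [rCF_cons_zero m l i him, rCF_sub m l i him, hmm]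
    field_simp
  · rw [rCF_cons_zero m l m le_rfl, hmm]
    field_simp
end

section
/- For a positive integer n, 0 ≤ i ≤ m, the value of the higher continued fraction at 1/n is r_{i,m}(1/n) = ⟪n, m-i⟫ / ⟪n, m⟫. In particular for m = 2: r_{2,2}(1/n) = 2/(n(n+1)) and r_{1,2}(1/n) = 2/(n+1). -/
open scoped BigOperators

lemma imchoose_zero_left (k : ℤ) : imchoose 0 k = if k = 0 then 1 else 0 := by
  unfold imchoose ichoose
  rcases lt_trichotomy k 0 with hk | hk | hk
  · simp [hk, hk.ne]
  · simp [hk]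
  · have h1 : ¬ k < 0 := by omega
    have h2 : k ≠ 0 := by omega
    simp only [h1, if_false, if_neg h2]
    have hz : (∏ i ∈ Finset.range k.toNat, ((((0:ℤ) + k - 1 : ℤ) : ℚ) - i)) = 0 := by
      apply Finset.prod_eq_zero (i := k.toNat - 1)
      · simp; omega
      · have hc : ((k.toNat : ℤ)) = k := Int.toNat_of_nonneg hk.le
        have h3 : 1 ≤ k.toNat := by omega
        push_cast [Nat.cast_sub h3]
        have : ((k.toNat : ℚ)) = (k : ℚ) := by exact_mod_cast hc
        rw [this]; ring
    rw [hz, zero_div]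

lemma CFmat_entry (m : ℕ) (n : ℤ) (a : Fin (m+1)) :
    CFmat m [0, n] a ⟨0, by omega⟩ = imchoose n (a : ℤ) := by
  have hC : CFmat m [0, n] = Lam m 0 * Lam m n := by
    simp [CFmat]
  rw [hC, Matrix.mul_apply]
  rw [Finset.sum_eq_single (⟨m - a, by omega⟩ : Fin (m+1))]
  · have ha : a.val ≤ m := by omega
    have h1 : (m : ℤ) - (a : ℕ) - ((m - a.val : ℕ) : ℕ) = 0 := by
      push_cast [Nat.cast_sub ha]; ring
    have h2 : (m : ℤ) - ((m - a.val : ℕ) : ℕ) - ((0:ℕ) : ℕ) = (a : ℤ) := by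
      push_cast [Nat.cast_sub ha]; ring
    simp only [Lam]
    rw [h1, h2, imchoose_zero_left]
    simp
  · intro j _ hj
    have ha : a.val ≤ m := by omega
    have hne : (m : ℤ) - (a : ℕ) - (j : ℕ) ≠ 0 := by
      have : j.val ≠ m - a.val := fun h => hj (by ext; simp [h])
      omega
    simp [Lam, imchoose_zero_left, hne]
  · intro h; exact absurd (Finset.mem_univ _) h

lemma rCF_formula (m i : ℕ) (n : ℤ) (him : i ≤ m) :
    rCF m [0, n] i = imchoose n ((m : ℤ) - i) / imchoose n (m : ℤ) := by
  unfold rCF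
  rw [CFmat_entry, CFmat_entry]
  congr 1
  · congr 1; push_cast [Nat.cast_sub him]; ring

/-- For a positive integer `n` and `0 ≤ i ≤ m`, the value of the higher continued fraction at
`1/n` (with continued fraction `[0, n]`) is `r_{i,m}(1/n) = ⟪n, m-i⟫ / ⟪n, m⟫`.  In
particular for `m = 2`: `r_{2,2}(1/n) = 2/(n(n+1))` and `r_{1,2}(1/n) = 2/(n+1)`. -/
theorem rCF_inv_int (m i : ℕ) (n : ℕ) (hn : 0 < n) (him : i ≤ m) :
    rCF m [0, (n : ℤ)] i = imchoose (n : ℤ) ((m : ℤ) - i) / imchoose (n : ℤ) (m : ℤ) ∧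
    rCF 2 [0, (n : ℤ)] 2 = 2 / ((n : ℚ) * ((n : ℚ) + 1)) ∧
    rCF 2 [0, (n : ℤ)] 1 = 2 / ((n : ℚ) + 1) := by
  have h0 : imchoose (n : ℤ) 0 = 1 := by
    unfold imchoose ichoose; norm_num
  have h1 : imchoose (n : ℤ) 1 = (n : ℚ) := by
    unfold imchoose ichoose
    norm_num [Finset.prod_range_succ]
  have h2 : imchoose (n : ℤ) 2 = (n : ℚ) * ((n : ℚ) + 1) / 2 := by
    unfold imchoose ichoose
    norm_num [show ((2:ℤ)).toNat = 2 from rfl, Finset.prod_range_succ, Nat.factorial]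
    ring
  have hn0 : (n : ℚ) ≠ 0 := Nat.cast_ne_zero.mpr hn.ne'
  have hn1 : (n : ℚ) + 1 ≠ 0 := by positivity
  refine ⟨rCF_formula m i n him, ?_, ?_⟩
  · rw [rCF_formula 2 2 n le_rfl]
    norm_num [h0, h2]
  · rw [rCF_formula 2 1 n (by norm_num)]
    norm_num [h1, h2]
    field_simp
end
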